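/- arXiv:1806.01497 — 7 statements merged into one kernel-verified Lean document; each statement's English description precedes it below -/
import Mathlib

section
/- Let ρ : Z → ℝ be a coherent risk measure on Z = L^p(Ω,F,P) with dual representation ρ(Z) = sup_{ζ∈𝔄} ∫ ζZ dP over a convex weak*-compact set 𝔄 of probability density functions, and subdifferential ∂ρ(Z) = argmax_{ζ∈𝔄} ∫ ζZ dP. If every ζ ∈ ∂ρ(Z) for every Z satisfies ζ(ω) > 0 for a.e. ω, then ρ is strictly monotone: Z ≽ Z' with Z ≠ Z' (i.e., Z ≥ Z' a.e. and Z > Z' on a set of positive measure) implies ρ(Z) > ρ(Z'). -/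
open MeasureTheory

/-- If every subgradient density ζ ∈ ∂ρ(Z) (i.e. every maximizer in the
dual representation ρ(Z) = sup_{ζ∈𝔄} ∫ ζ Z dP) is a.e. strictly positive, then the
coherent risk measure ρ is strictly monotone. -/
theorem stmt0 {Ω : Type*} [MeasurableSpace Ω] (P : Measure Ω) [IsProbabilityMeasure P]
    (𝔄 : Set (Ω → ℝ))
    (hdens : ∀ ζ ∈ 𝔄, (∀ᵐ ω ∂P, 0 ≤ ζ ω) ∧ ∫ ω, ζ ω ∂P = 1)
    (hint : ∀ ζ ∈ 𝔄, ∀ Z : Ω → ℝ, Integrable Z P → Integrable (fun ω => ζ ω * Z ω) P)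
    (ρ : (Ω → ℝ) → ℝ)
    (hρ : ∀ Z : Ω → ℝ, Integrable Z P →
      IsLUB ((fun ζ => ∫ ω, ζ ω * Z ω ∂P) '' 𝔄) (ρ Z))
    (hsubne : ∀ Z : Ω → ℝ, Integrable Z P →
      ∃ ζ ∈ 𝔄, ∫ ω, ζ ω * Z ω ∂P = ρ Z)
    (hpos : ∀ Z : Ω → ℝ, Integrable Z P → ∀ ζ ∈ 𝔄,
      ∫ ω, ζ ω * Z ω ∂P = ρ Z → ∀ᵐ ω ∂P, 0 < ζ ω) :
    ∀ Z Z' : Ω → ℝ, Integrable Z P → Integrable Z' P →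
      (∀ᵐ ω ∂P, Z' ω ≤ Z ω) → ¬ (Z =ᵐ[P] Z') → ρ Z' < ρ Z := by
  intro Z Z' hZ hZ' hle hne
  obtain ⟨ζ, hζA, hζmax⟩ := hsubne Z' hZ'
  have hζpos := hpos Z' hZ' ζ hζA hζmax
  -- ∫ ζ (Z - Z') > 0
  have hintD : Integrable (fun ω => ζ ω * (Z ω - Z' ω)) P := by
    have := (hint ζ hζA Z hZ).sub (hint ζ hζA Z' hZ')
    exact this.congr (by filter_upwards with ω; simp; ring)
  have hnn : 0 ≤ᵐ[P] fun ω => ζ ω * (Z ω - Z' ω) := by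
    filter_upwards [hζpos, hle] with ω h1 h2
    exact mul_nonneg h1.le (sub_nonneg.2 h2)
  have hposint : 0 < ∫ ω, ζ ω * (Z ω - Z' ω) ∂P := by
    rcases (integral_nonneg_of_ae hnn).lt_or_eq with h | h
    · exact h
    · exfalso
      have h0 : (fun ω => ζ ω * (Z ω - Z' ω)) =ᵐ[P] 0 :=
        (integral_eq_zero_iff_of_nonneg_ae hnn hintD).1 h.symm
      apply hne
      filter_upwards [h0, hζpos] with ω h1 h2
      have : Z ω - Z' ω = 0 := by
        by_contra hc
        exact hc (by
          have := mul_eq_zero.1 h1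
          rcases this with h | h
          · exact absurd h h2.ne'
          · exact h)
      linarith
  have hsplit : ∫ ω, ζ ω * (Z ω - Z' ω) ∂P
      = ∫ ω, ζ ω * Z ω ∂P - ∫ ω, ζ ω * Z' ω ∂P := by
    rw [← integral_sub (hint ζ hζA Z hZ) (hint ζ hζA Z' hZ')]
    congr 1; funext ω; ring
  have hlt : ρ Z' < ∫ ω, ζ ω * Z ω ∂P := by
    rw [← hζmax]; linarith [hsplit ▸ hposint]
  exact hlt.trans_le ((hρ Z hZ).1 ⟨ζ, hζA, rfl⟩)
end

section
/- Let ρ : Z → ℝ be a coherent risk measure with dual representation ρ(Z) = sup_{ζ∈𝔄} ∫ ζZ dP. If there exist Z ∈ Z, ζ ∈ ∂ρ(Z), and a measurable set A with P(A) > 0 such that ζ = 0 a.e. on A, then ρ is not strictly monotone; specifically, for Z' := Z − 𝟙_A one has Z ≽ Z', Z ≠ Z', yet ρ(Z) = ρ(Z'). -/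
open MeasureTheory

/-- If some maximizing density ζ ∈ ∂ρ(Z) vanishes a.e. on a set A of
positive probability, then ρ is not strictly monotone: with Z' := Z − 𝟙_A one has
Z ≽ Z', Z ≠ Z' (they differ on a set of positive measure), yet ρ(Z) = ρ(Z'). -/
theorem stmt1 {Ω : Type*} [MeasurableSpace Ω] (P : Measure Ω) [IsProbabilityMeasure P]
    (𝔄 : Set (Ω → ℝ))
    (hdens : ∀ ζ ∈ 𝔄, (∀ᵐ ω ∂P, 0 ≤ ζ ω) ∧ ∫ ω, ζ ω ∂P = 1)
    (hint : ∀ ζ ∈ 𝔄, ∀ W : Ω → ℝ, Integrable W P → Integrable (fun ω => ζ ω * W ω) P)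
    (ρ : (Ω → ℝ) → ℝ)
    (hρ : ∀ W : Ω → ℝ, Integrable W P →
      IsLUB ((fun ζ => ∫ ω, ζ ω * W ω ∂P) '' 𝔄) (ρ W))
    (Z : Ω → ℝ) (hZ : Integrable Z P) (ζ : Ω → ℝ) (hζ : ζ ∈ 𝔄)
    (hargmax : ∫ ω, ζ ω * Z ω ∂P = ρ Z)
    (A : Set Ω) (hA : MeasurableSet A) (hPA : 0 < P A)
    (hvan : ∀ᵐ ω ∂P, ω ∈ A → ζ ω = 0) :
    (∀ᵐ ω ∂P, Z ω - A.indicator (fun _ => (1 : ℝ)) ω ≤ Z ω) ∧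
    ¬ ((fun ω => Z ω - A.indicator (fun _ => (1 : ℝ)) ω) =ᵐ[P] Z) ∧
    ρ (fun ω => Z ω - A.indicator (fun _ => (1 : ℝ)) ω) = ρ Z := by
  set I : Ω → ℝ := A.indicator (fun _ => (1 : ℝ)) with hIdef
  have hInn : ∀ ω, 0 ≤ I ω := fun ω =>
    Set.indicator_nonneg (fun _ _ => zero_le_one) ω
  have hIint : Integrable I P := (integrable_const (1 : ℝ)).indicator hA
  have hZ' : Integrable (fun ω => Z ω - I ω) P := hZ.sub hIint
  refine ⟨Filter.Eventually.of_forall fun ω => by linarith [hInn ω], ?_, ?_⟩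
  · intro h
    have h0 : ∀ᵐ ω ∂P, I ω = 0 := by
      filter_upwards [h] with ω hω
      have : Z ω - I ω = Z ω := hω
      linarith
    have hsub : A ⊆ {ω | ¬ I ω = 0} := by
      intro ω hω
      simp [hIdef, hω]
    have : P A = 0 :=
      measure_mono_null hsub (ae_iff.mp h0)
    exact absurd this hPA.ne'
  · -- key part
    have hLUBZ := hρ Z hZ
    have hLUBZ' := hρ (fun ω => Z ω - I ω) hZ'
    -- For every ζ' ∈ 𝔄, ∫ ζ'(Z - I) = ∫ ζ'Z - ∫ ζ'I
    have hsplit : ∀ ζ' ∈ 𝔄,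
        ∫ ω, ζ' ω * (Z ω - I ω) ∂P = ∫ ω, ζ' ω * Z ω ∂P - ∫ ω, ζ' ω * I ω ∂P := by
      intro ζ' hζ'
      have h1 := hint ζ' hζ' Z hZ
      have h2 := hint ζ' hζ' I hIint
      rw [← integral_sub h1 h2]
      congr 1 with ω
      ring
    have hIzero : ∫ ω, ζ ω * I ω ∂P = 0 := by
      have : (fun ω => ζ ω * I ω) =ᵐ[P] (fun _ => (0 : ℝ)) := by
        filter_upwards [hvan] with ω hω
        by_cases hωA : ω ∈ A
        · simp [hω hωA]
        · simp [hIdef, Set.indicator_of_notMem hωA]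
      rw [integral_congr_ae this, integral_zero]
    have hmem : ρ Z ∈ (fun ζ => ∫ ω, ζ ω * (Z ω - I ω) ∂P) '' 𝔄 := by
      refine ⟨ζ, hζ, ?_⟩
      show ∫ ω, ζ ω * (Z ω - I ω) ∂P = ρ Z
      rw [hsplit ζ hζ, hIzero, hargmax, sub_zero]
    have hub : ρ Z ∈ upperBounds ((fun ζ => ∫ ω, ζ ω * (Z ω - I ω) ∂P) '' 𝔄) := by
      rintro x ⟨ζ', hζ', rfl⟩
      have hle1 : ∫ ω, ζ' ω * Z ω ∂P ≤ ρ Z := hLUBZ.1 ⟨ζ', hζ', rfl⟩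
      have hnn : 0 ≤ ∫ ω, ζ' ω * I ω ∂P := by
        refine integral_nonneg_of_ae ?_
        filter_upwards [(hdens ζ' hζ').1] with ω hω
        exact mul_nonneg hω (hInn ω)
      show ∫ ω, ζ' ω * (Z ω - I ω) ∂P ≤ ρ Z
      rw [hsplit ζ' hζ']
      linarith
    exact hLUBZ'.unique ⟨hub, fun b hb => hb hmem⟩
end

section
/- A coherent risk measure ρ with dual representation ρ(Z) = sup_{ζ∈𝔄} ∫ ζZ dP is strictly monotone if and only if for every Z ∈ Z and every ζ ∈ ∂ρ(Z), ζ(ω) > 0 for a.e. ω ∈ Ω. -/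
open MeasureTheory

/-- Proposition on strict monotonicity: a coherent risk measure ρ with
dual representation ρ(Z) = sup_{ζ∈𝔄} ∫ ζ Z dP (with nonempty argmax sets ∂ρ(Z)) is
strictly monotone iff every ζ ∈ ∂ρ(Z), for every Z, is a.e. strictly positive. -/
theorem stmt2 {Ω : Type*} [MeasurableSpace Ω] (P : Measure Ω) [IsProbabilityMeasure P]
    (𝔄 : Set (Ω → ℝ))
    (hdens : ∀ ζ ∈ 𝔄, (∀ᵐ ω ∂P, 0 ≤ ζ ω) ∧ ∫ ω, ζ ω ∂P = 1)
    (hint : ∀ ζ ∈ 𝔄, ∀ Z : Ω → ℝ, Integrable Z P → Integrable (fun ω => ζ ω * Z ω) P)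
    (ρ : (Ω → ℝ) → ℝ)
    (hρ : ∀ Z : Ω → ℝ, Integrable Z P →
      IsLUB ((fun ζ => ∫ ω, ζ ω * Z ω ∂P) '' 𝔄) (ρ Z))
    (hsubne : ∀ Z : Ω → ℝ, Integrable Z P →
      ∃ ζ ∈ 𝔄, ∫ ω, ζ ω * Z ω ∂P = ρ Z) :
    (∀ Z Z' : Ω → ℝ, Integrable Z P → Integrable Z' P →
      (∀ᵐ ω ∂P, Z' ω ≤ Z ω) → 0 < P {ω | Z' ω < Z ω} → ρ Z' < ρ Z)
    ↔
    (∀ Z : Ω → ℝ, Integrable Z P → ∀ ζ ∈ 𝔄,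
      ∫ ω, ζ ω * Z ω ∂P = ρ Z → ∀ᵐ ω ∂P, 0 < ζ ω) := by
  constructor
  · -- strict monotonicity → argmax densities a.e. positive
    intro hmono Z hZ ζ hζ hmax
    by_contra hpos
    have hζint : Integrable ζ P := by
      simpa using hint ζ hζ (fun _ => 1) (integrable_const 1)
    obtain ⟨hζ0, -⟩ := hdens ζ hζ
    set g := hζint.aestronglyMeasurable.mk ζ with hg
    have hgm : StronglyMeasurable g := hζint.aestronglyMeasurable.stronglyMeasurable_mk
    have hζg : ζ =ᵐ[P] g := hζint.aestronglyMeasurable.ae_eq_mk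
    set A : Set Ω := {ω | g ω ≤ 0} with hA
    have hAm : MeasurableSet A := hgm.measurable measurableSet_Iic
    have hne : P {ω | ¬ 0 < ζ ω} ≠ 0 := by
      intro h
      exact hpos (by rw [ae_iff]; exact h)
    have hPA : 0 < P A := by
      refine lt_of_lt_of_le (pos_iff_ne_zero.2 hne) (measure_mono_ae ?_)
      filter_upwards [hζg] with ω heq hω
      show g ω ≤ 0
      rw [← heq]
      exact not_lt.1 hω
    set Z' : Ω → ℝ := fun ω => Z ω - A.indicator (fun _ => (1 : ℝ)) ω with hZ'def
    have hindint : Integrable (A.indicator (fun _ => (1 : ℝ))) P :=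
      (integrable_const (1 : ℝ)).indicator hAm
    have hZ'int : Integrable Z' P := hZ.sub hindint
    have hle : ∀ᵐ ω ∂P, Z' ω ≤ Z ω := by
      refine Filter.Eventually.of_forall fun ω => ?_
      have : 0 ≤ A.indicator (fun _ => (1 : ℝ)) ω :=
        Set.indicator_nonneg (fun _ _ => zero_le_one) ω
      simp [hZ'def]; linarith
    have hset : {ω | Z' ω < Z ω} = A := by
      ext ω
      by_cases hωA : ω ∈ A <;> simp [hZ'def, Set.indicator_apply, hωA]
    have hltP : 0 < P {ω | Z' ω < Z ω} := by rw [hset]; exact hPA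
    have hρlt : ρ Z' < ρ Z := hmono Z Z' hZ hZ'int hle hltP
    -- but ∫ ζ Z' = ρ Z, so ρ Z ≤ ρ Z'
    have hzero : (fun ω => ζ ω * A.indicator (fun _ => (1 : ℝ)) ω) =ᵐ[P] 0 := by
      filter_upwards [hζ0, hζg] with ω h0 heq
      by_cases hωA : ω ∈ A
      · have : ζ ω ≤ 0 := by rw [heq]; exact hωA
        have : ζ ω = 0 := le_antisymm this h0
        simp [this]
      · simp [Set.indicator_of_notMem hωA]
    have hcalc : ∫ ω, ζ ω * Z' ω ∂P = ρ Z := by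
      have hfe : (fun ω => ζ ω * Z' ω)
          = fun ω => ζ ω * Z ω - ζ ω * A.indicator (fun _ => (1 : ℝ)) ω := by
        funext ω; simp [hZ'def]; ring
      rw [hfe, integral_sub (hint ζ hζ Z hZ) (hint ζ hζ _ hindint),
        integral_congr_ae hzero]
      simp [hmax]
    have hub : ∫ ω, ζ ω * Z' ω ∂P ≤ ρ Z' := (hρ Z' hZ'int).1 ⟨ζ, hζ, rfl⟩
    rw [hcalc] at hub
    exact absurd hρlt (not_lt.2 hub)
  · -- argmax densities a.e. positive → strict monotonicity
    intro hpos Z Z' hZ hZ' hle hlt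
    obtain ⟨ζ, hζ, hmax⟩ := hsubne Z' hZ'
    have hζpos := hpos Z' hZ' ζ hζ hmax
    have hfe : (fun ω => ζ ω * (Z ω - Z' ω)) = fun ω => ζ ω * Z ω - ζ ω * Z' ω := by
      funext ω; ring
    have hf : Integrable (fun ω => ζ ω * (Z ω - Z' ω)) P := by
      rw [hfe]; exact (hint ζ hζ Z hZ).sub (hint ζ hζ Z' hZ')
    have h0 : 0 ≤ᵐ[P] fun ω => ζ ω * (Z ω - Z' ω) := by
      filter_upwards [hζpos, hle] with ω h1 h2
      exact mul_nonneg h1.le (sub_nonneg.2 h2)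
    have hsupp : 0 < P (Function.support fun ω => ζ ω * (Z ω - Z' ω)) := by
      refine lt_of_lt_of_le hlt (measure_mono_ae ?_)
      filter_upwards [hζpos] with ω h1 h2
      exact ne_of_gt (mul_pos h1 (sub_pos.2 h2))
    have hI : 0 < ∫ ω, ζ ω * (Z ω - Z' ω) ∂P :=
      (integral_pos_iff_support_of_nonneg_ae h0 hf).2 hsupp
    have hsub : ∫ ω, ζ ω * (Z ω - Z' ω) ∂P
        = ∫ ω, ζ ω * Z ω ∂P - ∫ ω, ζ ω * Z' ω ∂P := by
      rw [hfe, integral_sub (hint ζ hζ Z hZ) (hint ζ hζ Z' hZ')]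
    have hlt' : ∫ ω, ζ ω * Z' ω ∂P < ∫ ω, ζ ω * Z ω ∂P := by
      rw [hsub] at hI; linarith
    calc ρ Z' = ∫ ω, ζ ω * Z' ω ∂P := hmax.symm
      _ < ∫ ω, ζ ω * Z ω ∂P := hlt'
      _ ≤ ρ Z := (hρ Z hZ).1 ⟨ζ, hζ, rfl⟩
end

section
/- Decomposability of a risk measure does not imply time consistency of all optimal policies: in the setting of the previous statement there exists an optimal policy for the minimax (decomposable ess sup) objective that fails to be optimal for the conditional problem at the second stage. -/
/-- Decomposability does not imply time consistency of all optimal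
policies: for the minimax (decomposable ess sup/max) objective
max (max (x 0) (x 1)) (max (4 x 2) (4 x 3)) over x : Fin 4 → [1,2], there exists a
globally optimal feasible policy xt which is not optimal for the conditional
second-stage problem: some feasible conditional decision strictly beats it on the
first branch. -/
theorem stmt11 :
    ∃ xt : Fin 4 → ℝ, (∀ j, xt j ∈ Set.Icc (1 : ℝ) 2) ∧
      (∀ x : Fin 4 → ℝ, (∀ j, x j ∈ Set.Icc (1 : ℝ) 2) →
        max (max (xt 0) (xt 1)) (max (4 * xt 2) (4 * xt 3)) ≤
          max (max (x 0) (x 1)) (max (4 * x 2) (4 * x 3))) ∧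
      (∃ y₁ y₂ : ℝ, y₁ ∈ Set.Icc (1 : ℝ) 2 ∧ y₂ ∈ Set.Icc (1 : ℝ) 2 ∧
        max y₁ y₂ < max (xt 0) (xt 1)) := by
  refine ⟨![2, 2, 1, 1], ?_, ?_, 1, 1, by norm_num, by norm_num, by norm_num⟩
  · intro j; fin_cases j <;> norm_num
  · intro x hx
    have h2 := (hx 2).1
    simp only [Matrix.cons_val_zero, Matrix.cons_val_one, Matrix.head_cons]
    have : (4:ℝ) ≤ 4 * x 2 := by linarith
    calc max (max 2 2) (max (4*1) (4*1)) = (4:ℝ) := by norm_num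
      _ ≤ 4 * x 2 := this
      _ ≤ _ := le_max_of_le_right (le_max_left _ _)
end

section
/- If a multistage problem min_x ρ₂(ρ₃(…ρ_T(F(x)))) with a decomposable risk measure ϱ = ρ₂∘⋯∘ρ_T has a unique optimal policy, and each ρ_t is monotone and translation equivariant, then this optimal policy is time consistent (its tail is optimal for every conditional tail problem). Simplified two-stage version: let ρ : Z₂ → ℝ be monotone, and let V(x₂)(ω) denote the cost of second-stage decision x₂ at ω. If x̄ = (x̄₁, x̄₂(·)) is the unique minimizer of ρ(f₁(x₁) + f₂(x₂(·),·)) over feasible policies, then for a.e. ω, x̄₂(ω) minimizes f₂(x₂,ω) over the feasible set X₂(x̄₁,ω). -/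
open MeasureTheory

/-!
Replace x̄₂(ω), wherever possible, by a feasible decision of strictly smaller second-stage
cost. By monotonicity of ρ the modified policy is no worse, so by optimality of x̄ it is
again optimal, and by uniqueness it agrees with x̄ almost everywhere. Hence almost surely
no strict improvement of x̄₂(ω) exists.
-/

section Improvement

variable {Ω E : Type*}

noncomputable def improveSelection (S : Ω → Set E) (g : E → Ω → ℝ) (x : Ω → E) (ω : Ω) : E :=
  open Classical in
  if h : ∃ y ∈ S ω, g y ω < g (x ω) ω then h.choose else x ω

variable (S : Ω → Set E) (g : E → Ω → ℝ) (x : Ω → E) (ω : Ω)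

theorem improveSelection_le : g (improveSelection S g x ω) ω ≤ g (x ω) ω := by
  unfold improveSelection
  split_ifs with h
  · exact h.choose_spec.2.le
  · exact le_rfl

theorem improveSelection_mem (hx : x ω ∈ S ω) : improveSelection S g x ω ∈ S ω := by
  unfold improveSelection
  split_ifs with h
  · exact h.choose_spec.1
  · exact hx

theorem isMinOn_of_improveSelection_eq (heq : improveSelection S g x ω = x ω) :
    IsMinOn (g · ω) (S ω) (x ω) := by
  refine isMinOn_iff.2 fun y hy => not_lt.1 fun hlt => ?_
  have h : ∃ y ∈ S ω, g y ω < g (x ω) ω := ⟨y, hy, hlt⟩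
  have hlt' : g (improveSelection S g x ω) ω < g (x ω) ω := by
    unfold improveSelection
    rw [dif_pos h]
    exact h.choose_spec.2
  exact hlt'.ne (congrArg (g · ω) heq)

end Improvement

theorem ae_isMinOn_of_unique_minimizer {Ω E : Type*} [MeasurableSpace Ω] {P : Measure Ω}
    {ρ : (Ω → ℝ) → ℝ} (hmono : ∀ V W : Ω → ℝ, (∀ᵐ ω ∂P, V ω ≤ W ω) → ρ V ≤ ρ W)
    {S : Ω → Set E} {g : E → Ω → ℝ} {xb : Ω → E} (hfeas : ∀ᵐ ω ∂P, xb ω ∈ S ω)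
    (hopt : ∀ x : Ω → E, (∀ᵐ ω ∂P, x ω ∈ S ω) →
      ρ (fun ω => g (xb ω) ω) ≤ ρ (fun ω => g (x ω) ω))
    (huniq : ∀ x : Ω → E, (∀ᵐ ω ∂P, x ω ∈ S ω) →
      ρ (fun ω => g (x ω) ω) = ρ (fun ω => g (xb ω) ω) → x =ᵐ[P] xb) :
    ∀ᵐ ω ∂P, IsMinOn (g · ω) (S ω) (xb ω) := by
  set x := improveSelection S g xb
  have hfeas' : ∀ᵐ ω ∂P, x ω ∈ S ω := hfeas.mono (improveSelection_mem S g xb)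
  have hle : ρ (fun ω => g (x ω) ω) ≤ ρ (fun ω => g (xb ω) ω) :=
    hmono _ _ (.of_forall (improveSelection_le S g xb))
  have hx : x =ᵐ[P] xb := huniq x hfeas' (le_antisymm hle (hopt x hfeas'))
  exact hx.mono (isMinOn_of_improveSelection_eq S g xb)

theorem stmt12_general {Ω X E : Type*} [MeasurableSpace Ω] (P : Measure Ω)
    (ρ : (Ω → ℝ) → ℝ)
    (hmono : ∀ V W : Ω → ℝ, (∀ᵐ ω ∂P, V ω ≤ W ω) → ρ V ≤ ρ W)
    (X₁ : Set X) (X₂ : X → Ω → Set E) (f₁ : X → ℝ) (f₂ : E → Ω → ℝ)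
    (xb₁ : X) (xb₂ : Ω → E)
    (hfeas₁ : xb₁ ∈ X₁) (hfeas₂ : ∀ᵐ ω ∂P, xb₂ ω ∈ X₂ xb₁ ω)
    (hopt : ∀ x₁ ∈ X₁, ∀ x₂ : Ω → E, (∀ᵐ ω ∂P, x₂ ω ∈ X₂ x₁ ω) →
      ρ (fun ω => f₁ xb₁ + f₂ (xb₂ ω) ω) ≤ ρ (fun ω => f₁ x₁ + f₂ (x₂ ω) ω))
    (huniq : ∀ x₁ ∈ X₁, ∀ x₂ : Ω → E, (∀ᵐ ω ∂P, x₂ ω ∈ X₂ x₁ ω) →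
      ρ (fun ω => f₁ x₁ + f₂ (x₂ ω) ω) = ρ (fun ω => f₁ xb₁ + f₂ (xb₂ ω) ω) →
      x₁ = xb₁ ∧ (∀ᵐ ω ∂P, x₂ ω = xb₂ ω)) :
    ∀ᵐ ω ∂P, ∀ y ∈ X₂ xb₁ ω, f₂ (xb₂ ω) ω ≤ f₂ y ω := by
  have hmin : ∀ᵐ ω ∂P, IsMinOn (fun y => f₁ xb₁ + f₂ y ω) (X₂ xb₁ ω) (xb₂ ω) :=
    ae_isMinOn_of_unique_minimizer hmono hfeas₂ (hopt xb₁ hfeas₁)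
      (fun x₂ hx₂ heq => (huniq xb₁ hfeas₁ x₂ hx₂ heq).2)
  filter_upwards [hmin] with ω hω y hy
  exact (add_le_add_iff_left _).1 (isMinOn_iff.1 hω y hy)

/-- simplified two-stage version: if ρ is monotone and the feasible
policy (x̄₁, x̄₂(·)) is the *unique* (up to a.e. equality) minimizer of
ρ(f₁(x₁) + f₂(x₂(·),·)), then it is time consistent: for a.e. ω the decision x̄₂(ω)
minimizes f₂(·,ω) over the feasible set X₂(x̄₁,ω). -/
theorem stmt12 {Ω X E : Type*} [MeasurableSpace Ω] (P : Measure Ω)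
    [IsProbabilityMeasure P]
    (ρ : (Ω → ℝ) → ℝ)
    (hmono : ∀ V W : Ω → ℝ, (∀ᵐ ω ∂P, V ω ≤ W ω) → ρ V ≤ ρ W)
    (X₁ : Set X) (X₂ : X → Ω → Set E) (f₁ : X → ℝ) (f₂ : E → Ω → ℝ)
    (xb₁ : X) (xb₂ : Ω → E)
    (hfeas₁ : xb₁ ∈ X₁) (hfeas₂ : ∀ᵐ ω ∂P, xb₂ ω ∈ X₂ xb₁ ω)
    (hopt : ∀ x₁ ∈ X₁, ∀ x₂ : Ω → E, (∀ᵐ ω ∂P, x₂ ω ∈ X₂ x₁ ω) →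
      ρ (fun ω => f₁ xb₁ + f₂ (xb₂ ω) ω) ≤ ρ (fun ω => f₁ x₁ + f₂ (x₂ ω) ω))
    (huniq : ∀ x₁ ∈ X₁, ∀ x₂ : Ω → E, (∀ᵐ ω ∂P, x₂ ω ∈ X₂ x₁ ω) →
      ρ (fun ω => f₁ x₁ + f₂ (x₂ ω) ω) = ρ (fun ω => f₁ xb₁ + f₂ (xb₂ ω) ω) →
      x₁ = xb₁ ∧ (∀ᵐ ω ∂P, x₂ ω = xb₂ ω)) :
    ∀ᵐ ω ∂P, ∀ y ∈ X₂ xb₁ ω, f₂ (xb₂ ω) ω ≤ f₂ y ω :=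
  stmt12_general P ρ hmono X₁ X₂ f₁ f₂ xb₁ xb₂ hfeas₁ hfeas₂ hopt huniq
end

section
/- Let ρ : Z₂ → ℝ be strictly monotone and let (x̄₁, x̄₂(·)) be any optimal policy of min ρ(f₁(x₁) + f₂(x₂(·),·)) over feasible policies. Then for a.e. ω, x̄₂(ω) is optimal for the conditional problem min_{x₂ ∈ X₂(x̄₁,ω)} f₂(x₂,ω), provided a measurable selection x̂₂(ω) of conditional minimizers exists. -/
open MeasureTheory

/-! If the second-stage cost of an optimal policy exceeded the conditional optimum on a set
of positive probability, replacing `x̄₂` by the selection `x̂₂` would lower the total cost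
a.e. and strictly on that set, so strict monotonicity of `ρ` would contradict optimality. -/

section StrictMono

variable {Ω : Type*} [MeasurableSpace Ω]

def IsStrictMonoRisk (P : Measure Ω) (ρ : (Ω → ℝ) → ℝ) : Prop :=
  ∀ V W : Ω → ℝ, V ≤ᵐ[P] W → 0 < P {ω | V ω < W ω} → ρ V < ρ W

theorem IsStrictMonoRisk.ae_le_of_ae_le_of_le {P : Measure Ω} {ρ : (Ω → ℝ) → ℝ}
    (hρ : IsStrictMonoRisk P ρ) {V W : Ω → ℝ} (hVW : V ≤ᵐ[P] W) (hWV : ρ W ≤ ρ V) :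
    W ≤ᵐ[P] V := by
  have hnull : P {ω | V ω < W ω} = 0 := by
    by_contra hpos
    exact (hρ V W hVW (pos_iff_ne_zero.mpr hpos)).not_ge hWV
  filter_upwards [measure_eq_zero_iff_ae_notMem.mp hnull] with ω hω
  exact not_lt.mp hω

end StrictMono

theorem stmt13_general {Ω X E : Type*} [MeasurableSpace Ω] (P : Measure Ω)
    (ρ : (Ω → ℝ) → ℝ)
    (hstrict : ∀ V W : Ω → ℝ, (∀ᵐ ω ∂P, V ω ≤ W ω) →
      0 < P {ω | V ω < W ω} → ρ V < ρ W)
    (X₁ : Set X) (X₂ : X → Ω → Set E) (f₁ : X → ℝ) (f₂ : E → Ω → ℝ)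
    (xb₁ : X) (xb₂ : Ω → E)
    (hfeas₁ : xb₁ ∈ X₁) (hfeas₂ : ∀ᵐ ω ∂P, xb₂ ω ∈ X₂ xb₁ ω)
    (hopt : ∀ x₁ ∈ X₁, ∀ x₂ : Ω → E, (∀ᵐ ω ∂P, x₂ ω ∈ X₂ x₁ ω) →
      ρ (fun ω => f₁ xb₁ + f₂ (xb₂ ω) ω) ≤ ρ (fun ω => f₁ x₁ + f₂ (x₂ ω) ω))
    (xh₂ : Ω → E)
    (hsel_feas : ∀ᵐ ω ∂P, xh₂ ω ∈ X₂ xb₁ ω)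
    (hsel_min : ∀ᵐ ω ∂P, ∀ y ∈ X₂ xb₁ ω, f₂ (xh₂ ω) ω ≤ f₂ y ω) :
    ∀ᵐ ω ∂P, ∀ y ∈ X₂ xb₁ ω, f₂ (xb₂ ω) ω ≤ f₂ y ω := by
  have hρ : IsStrictMonoRisk P ρ := hstrict
  have hsel_le :
      (fun ω => f₁ xb₁ + f₂ (xh₂ ω) ω) ≤ᵐ[P] fun ω => f₁ xb₁ + f₂ (xb₂ ω) ω := by
    filter_upwards [hfeas₂, hsel_min] with ω hxb hmin
    exact add_le_add_right (hmin _ hxb) _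
  have hle_sel := hρ.ae_le_of_ae_le_of_le hsel_le (hopt xb₁ hfeas₁ xh₂ hsel_feas)
  filter_upwards [hle_sel, hsel_min] with ω hle hmin y hy
  exact (le_of_add_le_add_left hle).trans (hmin y hy)

/-- if ρ is strictly monotone and (x̄₁, x̄₂(·)) is *any* optimal
feasible policy of min ρ(f₁(x₁) + f₂(x₂(·),·)), then, provided a (measurable,
feasible) selection x̂₂ of conditional minimizers exists, for a.e. ω the decision
x̄₂(ω) is optimal for the conditional problem min_{y ∈ X₂(x̄₁,ω)} f₂(y,ω). -/
theorem stmt13 {Ω X E : Type*} [MeasurableSpace Ω] (P : Measure Ω)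
    [IsProbabilityMeasure P]
    (ρ : (Ω → ℝ) → ℝ)
    (hmono : ∀ V W : Ω → ℝ, (∀ᵐ ω ∂P, V ω ≤ W ω) → ρ V ≤ ρ W)
    (hstrict : ∀ V W : Ω → ℝ, (∀ᵐ ω ∂P, V ω ≤ W ω) →
      0 < P {ω | V ω < W ω} → ρ V < ρ W)
    (X₁ : Set X) (X₂ : X → Ω → Set E) (f₁ : X → ℝ) (f₂ : E → Ω → ℝ)
    (xb₁ : X) (xb₂ : Ω → E)
    (hfeas₁ : xb₁ ∈ X₁) (hfeas₂ : ∀ᵐ ω ∂P, xb₂ ω ∈ X₂ xb₁ ω)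
    (hopt : ∀ x₁ ∈ X₁, ∀ x₂ : Ω → E, (∀ᵐ ω ∂P, x₂ ω ∈ X₂ x₁ ω) →
      ρ (fun ω => f₁ xb₁ + f₂ (xb₂ ω) ω) ≤ ρ (fun ω => f₁ x₁ + f₂ (x₂ ω) ω))
    (xh₂ : Ω → E)
    (hsel_feas : ∀ᵐ ω ∂P, xh₂ ω ∈ X₂ xb₁ ω)
    (hsel_min : ∀ᵐ ω ∂P, ∀ y ∈ X₂ xb₁ ω, f₂ (xh₂ ω) ω ≤ f₂ y ω) :
    ∀ᵐ ω ∂P, ∀ y ∈ X₂ xb₁ ω, f₂ (xb₂ ω) ω ≤ f₂ y ω :=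
  stmt13_general P ρ hstrict X₁ X₂ f₁ f₂ xb₁ xb₂ hfeas₁ hfeas₂ hopt xh₂ hsel_feas hsel_min
end

section
/- AV@R_α equals its spectral representation: for α ∈ (0,1) and Z ∈ L¹, AV@R_α(Z) = ∫₀¹ σ(t) F_Z^{−1}(t) dt where σ = α⁻¹ 𝟙_{[1−α,1]}, i.e., AV@R_α(Z) = α⁻¹ ∫_{1−α}^{1} F_Z^{−1}(t) dt. -/
/-!
Under Lebesgue measure on `(0, 1)`, the quantile function `q` of the law of `Z` has that same law,
so `E[(Z - t)₊] = ∫₀¹ (q u - t)₊ du`. For every `t`, `∫_{1-α}^1 q ≤ α t + ∫₀¹ (q - t)₊`, with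
equality at `t = q (1 - α)` because the monotone function `q - t` changes sign there.
-/

open MeasureTheory Set Filter ProbabilityTheory

namespace ProbabilityTheory

noncomputable def quantile (μ : Measure ℝ) (t : ℝ) : ℝ := sInf {z | t ≤ cdf μ z}

section Quantile

variable {μ : Measure ℝ} {t : ℝ}

lemma nonempty_le_cdf (ht : t < 1) : {z | t ≤ cdf μ z}.Nonempty :=
  ((tendsto_cdf_atTop μ).eventually_const_le ht).exists

lemma bddBelow_le_cdf (ht : 0 < t) : BddBelow {z | t ≤ cdf μ z} := by
  obtain ⟨z₀, hz₀⟩ := ((tendsto_cdf_atBot μ).eventually_lt_const ht).exists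
  exact ⟨z₀, fun z hz => le_of_not_gt fun hlt => (hz.trans (monotone_cdf μ hlt.le)).not_gt hz₀⟩

/-- Right-continuity of the cdf makes the infimum defining the quantile attained. -/
lemma quantile_le_iff (ht : t ∈ Ioo 0 1) (z : ℝ) : quantile μ t ≤ z ↔ t ≤ cdf μ z := by
  refine ⟨fun h => ?_, fun h => csInf_le (bddBelow_le_cdf ht.1) h⟩
  rw [← (cdf μ).iInf_Ioi_eq z]
  refine le_ciInf fun w => ?_
  obtain ⟨z', hz', hz'w⟩ := exists_lt_of_csInf_lt (nonempty_le_cdf ht.2) (h.trans_lt w.2)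
  exact hz'.trans (monotone_cdf μ hz'w.le)

lemma monotoneOn_quantile : MonotoneOn (quantile μ) (Ioo 0 1) := fun _ hs _ ht hst =>
  (quantile_le_iff hs _).mpr (hst.trans ((quantile_le_iff ht _).mp le_rfl))

lemma aemeasurable_quantile : AEMeasurable (quantile μ) (volume.restrict (Ioo 0 1)) :=
  aemeasurable_restrict_of_monotoneOn measurableSet_Ioo monotoneOn_quantile

variable [IsProbabilityMeasure μ]

lemma map_quantile_volume_Ioo : (volume.restrict (Ioo 0 1)).map (quantile μ) = μ := by
  have : IsProbabilityMeasure (volume.restrict (Ioo (0 : ℝ) 1)) := ⟨by simp⟩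
  have := Measure.isProbabilityMeasure_map (aemeasurable_quantile (μ := μ))
  refine Measure.ext_of_Iic _ _ fun z => ?_
  have hpre : quantile μ ⁻¹' Iic z ∩ Ioo 0 1 = Ioo 0 1 ∩ Iic (cdf μ z) := by
    ext u
    simp only [mem_inter_iff, mem_preimage, mem_Iic]
    exact ⟨fun ⟨h, hu⟩ => ⟨hu, (quantile_le_iff hu z).mp h⟩,
      fun ⟨hu, h⟩ => ⟨(quantile_le_iff hu z).mpr h, hu⟩⟩
  rw [Measure.map_apply_of_aemeasurable aemeasurable_quantile measurableSet_Iic,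
    Measure.restrict_apply' measurableSet_Ioo, hpre,
    measure_congr (t := Ioc 0 1 ∩ Iic (cdf μ z)) (Ioo_ae_eq_Ioc.inter (ae_eq_refl _)),
    Ioc_inter_Iic, min_eq_right (cdf_le_one μ z), Real.volume_Ioc, sub_zero, ofReal_cdf]

lemma integral_comp_quantile {g : ℝ → ℝ} (hg : AEStronglyMeasurable g μ) :
    ∫ u in Ioo 0 1, g (quantile μ u) = ∫ z, g z ∂μ := by
  rw [← map_quantile_volume_Ioo (μ := μ)] at hg
  rw [← integral_map aemeasurable_quantile hg, map_quantile_volume_Ioo]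

lemma integrableOn_quantile (h : Integrable id μ) : IntegrableOn (quantile μ) (Ioo 0 1) := by
  rw [← map_quantile_volume_Ioo (μ := μ)] at h
  exact (integrable_map_measure h.1 aemeasurable_quantile).mp h

end Quantile

end ProbabilityTheory

section MonotoneAVaR

variable {f : ℝ → ℝ} {a b c : ℝ}

lemma setIntegral_Ioo_sub_const (hf : IntegrableOn f (Ioo c b)) (hcb : c ≤ b) (t : ℝ) :
    ∫ u in Ioo c b, (f u - t) = (∫ u in Ioo c b, f u) - (b - c) * t := by
  rw [integral_sub hf (integrableOn_const (by simp)), setIntegral_const, smul_eq_mul,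
    Real.volume_real_Ioo_of_le hcb]

lemma setIntegral_Ioo_le_mul_add_setIntegral_max (hf : IntegrableOn f (Ioo a b)) (hac : a ≤ c)
    (hcb : c ≤ b) (t : ℝ) :
    ∫ u in Ioo c b, f u ≤ (b - c) * t + ∫ u in Ioo a b, max (f u - t) 0 := by
  have hsub : Ioo c b ⊆ Ioo a b := Ioo_subset_Ioo_left hac
  have hpos : IntegrableOn (fun u => max (f u - t) 0) (Ioo a b) :=
    (hf.sub (integrableOn_const (by simp))).pos_part
  have hbound : ∫ u in Ioo c b, (f u - t) ≤ ∫ u in Ioo a b, max (f u - t) 0 :=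
    calc ∫ u in Ioo c b, (f u - t)
        ≤ ∫ u in Ioo c b, max (f u - t) 0 :=
          setIntegral_mono ((hf.mono_set hsub).sub (integrableOn_const (by simp)))
            (hpos.mono_set hsub) fun u => le_max_left _ _
      _ ≤ ∫ u in Ioo a b, max (f u - t) 0 :=
          setIntegral_mono_set hpos (Eventually.of_forall fun u => le_max_right _ _)
            hsub.eventuallyLE
  rw [setIntegral_Ioo_sub_const (hf.mono_set hsub) hcb] at hbound
  linarith

/-- By monotonicity, `f - f c` is nonpositive on `(a, c]` and nonnegative on `(c, b)`. -/
lemma mul_add_setIntegral_max_eq_setIntegral_Ioo (hf : IntegrableOn f (Ioo a b))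
    (hmono : MonotoneOn f (Ioo a b)) (hc : c ∈ Ioo a b) :
    (b - c) * f c + ∫ u in Ioo a b, max (f u - f c) 0 = ∫ u in Ioo c b, f u := by
  have hsub : Ioo c b ⊆ Ioo a b := Ioo_subset_Ioo_left hc.1.le
  have hleft : ∀ u ∈ Ioo a b \ Ioo c b, max (f u - f c) 0 = 0 := fun u hu => by
    have huc : u ≤ c := not_lt.mp fun h => hu.2 ⟨h, hu.1.2⟩
    simpa using hmono hu.1 hc huc
  have hright : EqOn (fun u => max (f u - f c) 0) (fun u => f u - f c) (Ioo c b) :=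
    fun u hu => max_eq_left (sub_nonneg.mpr (hmono hc (hsub hu) hu.1.le))
  rw [setIntegral_eq_of_subset_of_forall_sdiff_eq_zero measurableSet_Ioo hsub hleft,
    setIntegral_congr_fun measurableSet_Ioo hright,
    setIntegral_Ioo_sub_const (hf.mono_set hsub) hc.2.le]
  ring

theorem iInf_mul_add_setIntegral_max_eq_setIntegral_Ioo (hf : IntegrableOn f (Ioo a b))
    (hmono : MonotoneOn f (Ioo a b)) (hc : c ∈ Ioo a b) :
    ⨅ t, (b - c) * t + ∫ u in Ioo a b, max (f u - t) 0 = ∫ u in Ioo c b, f u := by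
  have hlow := setIntegral_Ioo_le_mul_add_setIntegral_max hf hc.1.le hc.2.le
  refine le_antisymm ?_ (le_ciInf hlow)
  rw [← mul_add_setIntegral_max_eq_setIntegral_Ioo hf hmono hc]
  exact ciInf_le ⟨_, forall_mem_range.mpr hlow⟩ (f c)

end MonotoneAVaR

theorem stmt17_general {Ω : Type*} [MeasurableSpace Ω] (P : Measure Ω) [IsProbabilityMeasure P]
    (α : ℝ) (hα : 0 < α) (hα1 : α < 1)
    (Z : Ω → ℝ) (hZ : Integrable Z P) :
    (⨅ t : ℝ, t + α⁻¹ * ∫ ω, max (Z ω - t) 0 ∂P) =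
      α⁻¹ * ∫ t in Set.Ioc (1 - α) 1, sInf {z : ℝ | t ≤ (P {ω | Z ω ≤ z}).toReal} := by
  set μ := P.map Z
  have : IsProbabilityMeasure μ := Measure.isProbabilityMeasure_map hZ.aemeasurable
  have hquantile : (fun t => sInf {z : ℝ | t ≤ (P {ω | Z ω ≤ z}).toReal}) = quantile μ := by
    ext t
    simp only [quantile, cdf_eq_real, measureReal_def, μ,
      Measure.map_apply_of_aemeasurable hZ.aemeasurable measurableSet_Iic]
    rfl
  have hE (t : ℝ) : ∫ ω, max (Z ω - t) 0 ∂P = ∫ u in Ioo 0 1, max (quantile μ u - t) 0 := by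
    have hg : AEStronglyMeasurable (fun z : ℝ => max (z - t) 0) μ := by fun_prop
    rw [integral_comp_quantile hg, integral_map hZ.aemeasurable hg]
  have hint : IntegrableOn (quantile μ) (Ioo 0 1) :=
    integrableOn_quantile ((integrable_map_measure aestronglyMeasurable_id hZ.aemeasurable).mpr hZ)
  calc (⨅ t : ℝ, t + α⁻¹ * ∫ ω, max (Z ω - t) 0 ∂P)
      = ⨅ t : ℝ, α⁻¹ * ((1 - (1 - α)) * t + ∫ u in Ioo 0 1, max (quantile μ u - t) 0) := by
        refine iInf_congr fun t => ?_
        rw [hE, sub_sub_cancel, mul_add, inv_mul_cancel_left₀ hα.ne']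
    _ = α⁻¹ * ∫ u in Ioo (1 - α) 1, quantile μ u := by
        rw [← Real.mul_iInf_of_nonneg (inv_nonneg.mpr hα.le),
          iInf_mul_add_setIntegral_max_eq_setIntegral_Ioo hint monotoneOn_quantile
            ⟨by linarith, by linarith⟩]
    _ = _ := by rw [hquantile, integral_Ioc_eq_integral_Ioo]

/-- spectral representation of AV@R: for α ∈ (0,1) and integrable Z,
inf_t { t + α⁻¹ E[(Z−t)₊] } = α⁻¹ ∫_{1−α}^{1} F_Z^{−1}(t) dt, where
F_Z^{−1}(t) = inf { z | P(Z ≤ z) ≥ t } is the left-side quantile of Z. -/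
theorem stmt17 {Ω : Type*} [MeasurableSpace Ω] (P : Measure Ω) [IsProbabilityMeasure P]
    (α : ℝ) (hα : 0 < α) (hα1 : α < 1)
    (Z : Ω → ℝ) (hZm : Measurable Z) (hZ : Integrable Z P) :
    (⨅ t : ℝ, t + α⁻¹ * ∫ ω, max (Z ω - t) 0 ∂P) =
      α⁻¹ * ∫ t in Set.Ioc (1 - α) 1, sInf {z : ℝ | t ≤ (P {ω | Z ω ≤ z}).toReal} :=
  stmt17_general P α hα hα1 Z hZ
end
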